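/- For every K ≥ 1 there is C(K) > 0 such that for every A ≥ 1 there exists s₀(A) ≥ 1 with the following property: for all s ≥ s₀(A) and every continuous r ∈ L∞(ℝ,ℂ) belonging to 𝒱_A(s), one has (i) sup_{|y| < 2K s^{1/4}} |r(y)| ≤ C(K)·A^{M+1}/s^{1/4} and sup_{y∈ℝ} |r(y)| ≤ C(K)·A^{M+2}/s^{1/4}; and (ii) for all y ∈ ℝ, |r(y)| ≤ C·(A^{M+1}/s)·(1 + |y|^{M+1}). -/

import Mathlib

open Complex MeasureTheory

/-- `x^w := exp(w · log x)` for a positive real base `x` and complex exponent `w`. -/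
noncomputable def rcpow (x : ℝ) (w : ℂ) : ℂ := Complex.exp (w * Real.log x)

/-- The approximate profile
`φ(y,s) = κ^{−iδ}·(p−1 + b y²/√s)^{−(1+iδ)/(p−1)} + (1+iδ)·a/√s`. -/
noncomputable def phiA (p δ κ b a : ℝ) (y s : ℝ) : ℂ :=
  rcpow κ (-(Complex.I * δ)) *
    rcpow (p - 1 + b * y ^ 2 / Real.sqrt s) (-(1 + Complex.I * δ) / (p - 1)) +
  (1 + Complex.I * δ) * ((a / Real.sqrt s : ℝ) : ℂ)

/-- `V₁(y,s) = (1+iδ)·((p+1)/2)·(|φ|^{p−1} − 1/(p−1))`. -/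
noncomputable def V1 (p δ κ b a : ℝ) (y s : ℝ) : ℂ :=
  (1 + Complex.I * δ) * ((p + 1) / 2) *
    (((‖phiA p δ κ b a y s‖ ^ (p - 1) : ℝ) : ℂ) - ((1 / (p - 1) : ℝ) : ℂ))

/-- `V₂(y,s) = (1+iδ)·((p−1)/2)·(|φ|^{p−3}·φ² − 1/(p−1))`. -/
noncomputable def V2 (p δ κ b a : ℝ) (y s : ℝ) : ℂ :=
  (1 + Complex.I * δ) * ((p - 1) / 2) *
    (((‖phiA p δ κ b a y s‖ ^ (p - 3) : ℝ) : ℂ) * (phiA p δ κ b a y s) ^ 2 -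
      ((1 / (p - 1) : ℝ) : ℂ))

/-- The `m`-th rescaled Hermite polynomial. -/
noncomputable def hpoly (m : ℕ) (y : ℝ) : ℝ :=
  ∑ n ∈ Finset.range (m / 2 + 1),
    ((Nat.factorial m : ℝ) / ((Nat.factorial n : ℝ) * (Nat.factorial (m - 2 * n) : ℝ))) *
      (-1 : ℝ) ^ n * y ^ (m - 2 * n)

/-- The Gaussian weight `ρ(y) = (4π)^{−1/2} e^{−y²/4}`. -/
noncomputable def gw (y : ℝ) : ℝ := (4 * Real.pi) ^ (-(1 : ℝ) / 2) * Real.exp (-y ^ 2 / 4)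

/-- `Q_n(r) = (∫ r h_n ρ)/(∫ h_n² ρ)`. -/
noncomputable def Qcoef (r : ℝ → ℂ) (n : ℕ) : ℂ :=
  (∫ y : ℝ, r y * ((hpoly n y : ℝ) : ℂ) * ((gw y : ℝ) : ℂ)) /
    (((∫ y : ℝ, (hpoly n y) ^ 2 * gw y) : ℝ) : ℂ)

/-- `r̃_n = Re Q_n(r)`. -/
noncomputable def tildeC (r : ℝ → ℂ) (n : ℕ) : ℝ := (Qcoef r n).re

/-- `r̂_n = Im Q_n(r) − δ·Re Q_n(r)`. -/
noncomputable def hatC (δ : ℝ) (r : ℝ → ℂ) (n : ℕ) : ℝ :=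
  (Qcoef r n).im - δ * (Qcoef r n).re

/-- `r_- = r − Σ_{n≤M} Q_n(r)h_n`. -/
noncomputable def qminus (M : ℕ) (r : ℝ → ℂ) (y : ℝ) : ℂ :=
  r y - ∑ n ∈ Finset.range (M + 1), Qcoef r n * ((hpoly n y : ℝ) : ℂ)

/-- The space cut-off `χ(y,s) = χ₀(|y|/(K s^{1/4}))`. -/
noncomputable def chi (χ₀ : ℝ → ℝ) (K y s : ℝ) : ℝ := χ₀ (|y| / (K * s ^ ((1 : ℝ) / 4)))

/-- `χ₀` is a smooth non-increasing cut-off, `≡ 1` on `[0,1]`, `≡ 0` on `[2,∞)`,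
with values in `[0,1]`. -/
def chiProp (χ₀ : ℝ → ℝ) : Prop :=
  ContDiff ℝ (⊤ : ℕ∞) χ₀ ∧ Antitone χ₀ ∧ (∀ x, 0 ≤ χ₀ x ∧ χ₀ x ≤ 1) ∧
    (∀ x ≤ (1 : ℝ), χ₀ x = 1) ∧ (∀ x : ℝ, 2 ≤ x → χ₀ x = 0)

/-- Membership in the shrinking set `𝒱_A(s)`. -/
def inV (δ : ℝ) (M : ℕ) (χ₀ : ℝ → ℝ) (K A s : ℝ) (r : ℝ → ℂ) : Prop :=
  (∀ y : ℝ, ‖r y * ((1 - chi χ₀ K y s : ℝ) : ℂ)‖ ≤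
      A ^ (M + 2) / s ^ ((1 : ℝ) / 4)) ∧
  (∀ y : ℝ, ‖qminus M r y‖ ≤
      A ^ (M + 1) / s ^ (((M : ℝ) + 2) / 4) * (1 + |y| ^ (M + 1))) ∧
  (∀ j : ℕ, 3 ≤ j → j ≤ M →
    |hatC δ r j| ≤ A ^ j / s ^ (((j : ℝ) + 1) / 4) ∧
    |tildeC r j| ≤ A ^ j / s ^ (((j : ℝ) + 1) / 4)) ∧
  |tildeC r 0| ≤ A / s ^ ((3 : ℝ) / 2) ∧ |tildeC r 1| ≤ A / s ^ ((3 : ℝ) / 2) ∧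
  |hatC δ r 0| ≤ 1 / s ^ ((3 : ℝ) / 2) ∧ |hatC δ r 1| ≤ A ^ 4 / s ^ ((3 : ℝ) / 2) ∧
  |tildeC r 2| ≤ A ^ 5 / s ∧ |hatC δ r 2| ≤ A ^ 3 / s

noncomputable def hc (m : ℕ) : ℝ :=
  ∑ n ∈ Finset.range (m / 2 + 1),
    ((Nat.factorial m : ℝ) / ((Nat.factorial n : ℝ) * (Nat.factorial (m - 2 * n) : ℝ)))

lemma hc_nonneg (m : ℕ) : 0 ≤ hc m :=
  Finset.sum_nonneg fun n _ => by positivity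

lemma hpoly_le (m : ℕ) (y t : ℝ) (ht : 1 ≤ t) (hy : |y| ≤ t) :
    |hpoly m y| ≤ hc m * t ^ m := by
  have ht0 : (0:ℝ) ≤ t := le_trans zero_le_one ht
  calc |hpoly m y| ≤ ∑ n ∈ Finset.range (m / 2 + 1),
      |((Nat.factorial m : ℝ) / ((Nat.factorial n : ℝ) * (Nat.factorial (m - 2 * n) : ℝ))) *
        (-1 : ℝ) ^ n * y ^ (m - 2 * n)| := Finset.abs_sum_le_sum_abs _ _
    _ ≤ ∑ n ∈ Finset.range (m / 2 + 1),
      ((Nat.factorial m : ℝ) / ((Nat.factorial n : ℝ) * (Nat.factorial (m - 2 * n) : ℝ))) * t ^ m := by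
        refine Finset.sum_le_sum fun n _ => ?_
        rw [_root_.abs_mul, _root_.abs_mul, _root_.abs_pow, abs_neg, abs_one, one_pow,
          mul_one, _root_.abs_pow]
        rw [_root_.abs_of_nonneg (by positivity : (0:ℝ) ≤ (Nat.factorial m : ℝ) /
          ((Nat.factorial n : ℝ) * (Nat.factorial (m - 2 * n) : ℝ)))]
        have h1 : |y| ^ (m - 2*n) ≤ t ^ (m - 2*n) := pow_le_pow_left₀ (abs_nonneg y) hy _
        have h2 : t ^ (m - 2*n) ≤ t ^ m := pow_le_pow_right₀ ht (Nat.sub_le m (2*n))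
        have := h1.trans h2
        gcongr
    _ = hc m * t ^ m := by rw [hc, Finset.sum_mul]

lemma onep_pow (t : ℝ) (ht : 0 ≤ t) (k : ℕ) : (1 + t) ^ k ≤ 2 ^ k * (1 + t ^ k) := by
  rcases le_total t 1 with h | h
  · have h1 : (1 + t) ^ k ≤ 2 ^ k := pow_le_pow_left₀ (by linarith) (by linarith) k
    have h2 : (0:ℝ) ≤ t ^ k := by positivity
    nlinarith [pow_pos (show (0:ℝ) < 2 by norm_num) k]
  · have h1 : (1 + t) ^ k ≤ (2 * t) ^ k := pow_le_pow_left₀ (by linarith) (by linarith) k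
    calc (1 + t) ^ k ≤ (2*t) ^ k := h1
      _ = 2 ^ k * t ^ k := mul_pow 2 t k
      _ ≤ 2 ^ k * (1 + t ^ k) := by
          nlinarith [pow_nonneg ht k, pow_pos (show (0:ℝ) < 2 by norm_num) k]

set_option maxHeartbeats 1000000 in
/-- properties of the shrinking set `𝒱_A(s)`: uniform bounds on
elements of `𝒱_A(s)` in the inner region, globally, and with polynomial weight. -/
theorem stmt11 (p δ κ b a : ℝ) (hp : 1 < p) (hδ : δ = Real.sqrt p)
    (hκ : κ = (p - 1) ^ (-(1 : ℝ) / (p - 1)))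
    (hb : b = (p - 1) ^ 2 / (8 * Real.sqrt (p * (p + 1))))
    (ha : a = κ / (4 * Real.sqrt (p * (p + 1))))
    (M : ℕ) (hMeven : Even M)
    (VB : ℝ)
    (hVB : ∀ y s : ℝ, 1 ≤ s →
      ‖V1 p δ κ b a y s‖ ≤ VB ∧ ‖V2 p δ κ b a y s‖ ≤ VB)
    (hM : 4 * (Real.sqrt (1 + δ ^ 2) + 1 + 2 * VB) ≤ (M : ℝ))
    (χ₀ : ℝ → ℝ) (hχ : chiProp χ₀) :
    ∀ K : ℝ, 1 ≤ K → ∃ C : ℝ, 0 < C ∧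
      ∀ A : ℝ, 1 ≤ A → ∃ s₀ : ℝ, 1 ≤ s₀ ∧
        ∀ s : ℝ, s₀ ≤ s → ∀ r : ℝ → ℂ, Continuous r →
          (∃ Cb : ℝ, ∀ y : ℝ, ‖r y‖ ≤ Cb) →
          inV δ M χ₀ K A s r →
          (∀ y : ℝ, |y| < 2 * K * s ^ ((1 : ℝ) / 4) →
            ‖r y‖ ≤ C * A ^ (M + 1) / s ^ ((1 : ℝ) / 4)) ∧
          (∀ y : ℝ, ‖r y‖ ≤ C * A ^ (M + 2) / s ^ ((1 : ℝ) / 4)) ∧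
          (∀ y : ℝ, ‖r y‖ ≤ C * (A ^ (M + 1) / s) * (1 + |y| ^ (M + 1))) := by
  intro K hK
  have hK0 : (0:ℝ) < K := lt_of_lt_of_le one_pos hK
  have h2K : (1:ℝ) ≤ 2*K := by linarith
  have h2Kp : ∀ n : ℕ, (1:ℝ) ≤ (2*K)^n := fun n => one_le_pow₀ h2K
  have hVB0 : (0:ℝ) ≤ VB := le_trans (norm_nonneg _) (hVB 0 1 le_rfl).1
  have hsq1 : (1:ℝ) ≤ Real.sqrt (1 + δ ^ 2) := by
    have h := Real.sqrt_le_sqrt (show (1:ℝ) ≤ 1 + δ ^ 2 by nlinarith [sq_nonneg δ])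
    simpa using h
  have hM8 : (8:ℝ) ≤ (M:ℝ) := by nlinarith
  have hM8' : 8 ≤ M := by exact_mod_cast hM8
  set S : ℝ := ∑ n ∈ Finset.range (M + 1), hc n * (2*K) ^ n with hSdef
  have hS0 : (0:ℝ) ≤ S :=
    Finset.sum_nonneg fun n _ => mul_nonneg (hc_nonneg n) (by positivity)
  have hpow2 : (1:ℝ) ≤ 2^(M+1) := one_le_pow₀ (by norm_num)
  have hKp0 : (0:ℝ) ≤ (2*K)^(M+1) := by positivity
  have hd0 : (0:ℝ) ≤ 1 + |δ| := by positivity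
  refine ⟨1 + (2*K)^(M+1) + (2+|δ|) * 2^(M+1) * S, ?_, ?_⟩
  · have h2 : (0:ℝ) ≤ (2+|δ|)*2^(M+1)*S := by positivity
    linarith
  intro A hA
  refine ⟨1, le_rfl, ?_⟩
  intro s hs r _ _ hV
  have hA0 : (0:ℝ) < A := lt_of_lt_of_le one_pos hA
  have hs0 : (0:ℝ) < s := lt_of_lt_of_le one_pos hs
  obtain ⟨hV1, hV2, hV3, ht0, ht1, hh0, hh1, ht2, hh2⟩ := hV
  have hAle : ∀ k : ℕ, k ≤ M + 1 → A ^ k ≤ A ^ (M+1) := fun k hk => pow_le_pow_right₀ hA hk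
  have hA1 : A ≤ A^(M+1) := by simpa using hAle 1 (by omega)
  have hA01 : (1:ℝ) ≤ A^(M+1) := one_le_pow₀ hA
  -- |Q_n| ≤ (1+|δ|)|r̃_n| + |r̂_n|
  have habs : ∀ n : ℕ, ‖Qcoef r n‖ ≤ (1+|δ|) * |tildeC r n| + |hatC δ r n| := by
    intro n
    have h1 := Complex.norm_le_abs_re_add_abs_im (Qcoef r n)
    have h2 : (Qcoef r n).im = hatC δ r n + δ * (Qcoef r n).re := by
      simp [hatC]
    have h3 : |(Qcoef r n).im| ≤ |hatC δ r n| + |δ| * |(Qcoef r n).re| := by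
      rw [h2]; exact (abs_add_le _ _).trans (by rw [abs_mul])
    calc ‖Qcoef r n‖ ≤ |(Qcoef r n).re| + |(Qcoef r n).im| := h1
      _ ≤ |(Qcoef r n).re| + (|hatC δ r n| + |δ| * |(Qcoef r n).re|) := by linarith
      _ = (1+|δ|) * |tildeC r n| + |hatC δ r n| := by rw [tildeC]; ring
  -- key coefficient bounds
  have key : ∀ n : ℕ, n ≤ M →
      ‖Qcoef r n‖ ≤ (2+|δ|) * A^(M+1) / s ^ (((n:ℝ)+1)/4) ∧
      ‖Qcoef r n‖ ≤ (2+|δ|) * A^(M+1) / s := by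
    have hnum : (0:ℝ) ≤ (2+|δ|) * A^(M+1) := by positivity
    have fin : ∀ (n : ℕ) (e : ℝ), ((n:ℝ)+1)/4 ≤ e → 1 ≤ e →
        ‖Qcoef r n‖ ≤ (2+|δ|) * A^(M+1) / s ^ e →
        ‖Qcoef r n‖ ≤ (2+|δ|) * A^(M+1) / s ^ (((n:ℝ)+1)/4) ∧
        ‖Qcoef r n‖ ≤ (2+|δ|) * A^(M+1) / s := by
      intro n e h1 h2 h3
      constructor
      · exact h3.trans (div_le_div_of_nonneg_left hnum (Real.rpow_pos_of_pos hs0 _)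
          (Real.rpow_le_rpow_of_exponent_le hs h1))
      · refine h3.trans (div_le_div_of_nonneg_left hnum hs0 ?_)
        calc s = s ^ (1:ℝ) := (Real.rpow_one s).symm
          _ ≤ s ^ e := Real.rpow_le_rpow_of_exponent_le hs h2
    intro n hn
    match n, hn with
    | 0, hn =>
      refine fin 0 ((3:ℝ)/2) (by norm_num) (by norm_num) ?_
      calc ‖Qcoef r 0‖ ≤ (1+|δ|) * |tildeC r 0| + |hatC δ r 0| := habs 0
        _ ≤ (1+|δ|) * (A / s ^ ((3:ℝ)/2)) + 1 / s ^ ((3:ℝ)/2) :=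
            add_le_add (mul_le_mul_of_nonneg_left ht0 hd0) hh0
        _ = ((1+|δ|) * A + 1) / s ^ ((3:ℝ)/2) := by ring
        _ ≤ (2+|δ|) * A ^ (M+1) / s ^ ((3:ℝ)/2) := by
            apply (div_le_div_iff_of_pos_right (Real.rpow_pos_of_pos hs0 _)).mpr
            nlinarith [abs_nonneg δ]
    | 1, hn =>
      refine fin 1 ((3:ℝ)/2) (by norm_num) (by norm_num) ?_
      calc ‖Qcoef r 1‖ ≤ (1+|δ|) * |tildeC r 1| + |hatC δ r 1| := habs 1
        _ ≤ (1+|δ|) * (A / s ^ ((3:ℝ)/2)) + A^4 / s ^ ((3:ℝ)/2) :=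
            add_le_add (mul_le_mul_of_nonneg_left ht1 hd0) hh1
        _ = ((1+|δ|) * A + A^4) / s ^ ((3:ℝ)/2) := by ring
        _ ≤ (2+|δ|) * A ^ (M+1) / s ^ ((3:ℝ)/2) := by
            apply (div_le_div_iff_of_pos_right (Real.rpow_pos_of_pos hs0 _)).mpr
            have h4 : A^4 ≤ A^(M+1) := hAle 4 (by omega)
            nlinarith [abs_nonneg δ]
    | 2, hn =>
      refine fin 2 (1:ℝ) (by norm_num) le_rfl ?_
      rw [Real.rpow_one]
      calc ‖Qcoef r 2‖ ≤ (1+|δ|) * |tildeC r 2| + |hatC δ r 2| := habs 2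
        _ ≤ (1+|δ|) * (A^5 / s) + A^3 / s :=
            add_le_add (mul_le_mul_of_nonneg_left ht2 hd0) hh2
        _ = ((1+|δ|) * A^5 + A^3) / s := by ring
        _ ≤ (2+|δ|) * A ^ (M+1) / s := by
            apply (div_le_div_iff_of_pos_right hs0).mpr
            have h5 : A^5 ≤ A^(M+1) := hAle 5 (by omega)
            have h3 : A^3 ≤ A^(M+1) := hAle 3 (by omega)
            nlinarith [abs_nonneg δ]
    | (k+3), hn =>
      obtain ⟨hhat, htil⟩ := hV3 (k+3) (by omega) hn
      refine fin (k+3) ((((k+3:ℕ):ℝ)+1)/4) le_rfl ?_ ?_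
      · push_cast
        have : (0:ℝ) ≤ (k:ℝ) := Nat.cast_nonneg k
        linarith
      · calc ‖Qcoef r (k+3)‖
            ≤ (1+|δ|) * |tildeC r (k+3)| + |hatC δ r (k+3)| := habs (k+3)
          _ ≤ (1+|δ|) * (A^(k+3) / s ^ ((((k+3:ℕ):ℝ)+1)/4)) + A^(k+3) / s ^ ((((k+3:ℕ):ℝ)+1)/4) :=
              add_le_add (mul_le_mul_of_nonneg_left htil hd0) hhat
          _ = ((2+|δ|) * A^(k+3)) / s ^ ((((k+3:ℕ):ℝ)+1)/4) := by ring
          _ ≤ (2+|δ|) * A ^ (M+1) / s ^ ((((k+3:ℕ):ℝ)+1)/4) := by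
              apply (div_le_div_iff_of_pos_right (Real.rpow_pos_of_pos hs0 _)).mpr
              have hk : A^(k+3) ≤ A^(M+1) := hAle (k+3) (by omega)
              nlinarith [abs_nonneg δ]
  -- decomposition
  have hdecomp : ∀ y : ℝ, ‖r y‖ ≤ ‖qminus M r y‖ +
      ∑ n ∈ Finset.range (M+1), ‖Qcoef r n‖ * |hpoly n y| := by
    intro y
    have h1 : r y = qminus M r y +
        ∑ n ∈ Finset.range (M+1), Qcoef r n * ((hpoly n y : ℝ):ℂ) := by
      simp [qminus]
    calc ‖r y‖
        = ‖qminus M r y +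
            ∑ n ∈ Finset.range (M+1), Qcoef r n * ((hpoly n y : ℝ):ℂ)‖ := by rw [← h1]
      _ ≤ ‖qminus M r y‖ +
          ‖∑ n ∈ Finset.range (M+1), Qcoef r n * ((hpoly n y : ℝ):ℂ)‖ :=
            norm_add_le _ _
      _ ≤ ‖qminus M r y‖ +
          ∑ n ∈ Finset.range (M+1), ‖Qcoef r n * ((hpoly n y : ℝ):ℂ)‖ :=
            add_le_add_right (norm_sum_le _ _) _
      _ = ‖qminus M r y‖ +
          ∑ n ∈ Finset.range (M+1), ‖Qcoef r n‖ * |hpoly n y| := by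
            simp [Complex.norm_real]
  have hspos14 : (0:ℝ) < s ^ ((1:ℝ)/4) := Real.rpow_pos_of_pos hs0 _
  have hsMpos : (0:ℝ) < s ^ (((M:ℝ)+2)/4) := Real.rpow_pos_of_pos hs0 _
  have hsM : s ≤ s ^ (((M:ℝ)+2)/4) := by
    calc s = s ^ (1:ℝ) := (Real.rpow_one s).symm
      _ ≤ s ^ (((M:ℝ)+2)/4) := Real.rpow_le_rpow_of_exponent_le hs (by linarith)
  -- Part (iii): polynomially weighted bound
  have P3 : ∀ y : ℝ, ‖r y‖ ≤
      (1 + (2+|δ|) * 2^(M+1) * S) * (A ^ (M+1) / s) * (1 + |y| ^ (M+1)) := by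
    intro y
    have hts : (1:ℝ) ≤ 1 + |y| := le_add_of_nonneg_right (abs_nonneg y)
    have hXnn : (0:ℝ) ≤ 2^(M+1) * (1 + |y|^(M+1)) := by positivity
    have hcnn : (0:ℝ) ≤ (2+|δ|) * A^(M+1) / s := div_nonneg (by positivity) hs0.le
    have hterm : ∀ n ∈ Finset.range (M+1),
        ‖Qcoef r n‖ * |hpoly n y| ≤
        ((2+|δ|) * A^(M+1) / s) * (hc n * (2^(M+1) * (1 + |y|^(M+1)))) := by
      intro n hn
      have hn' : n ≤ M := Nat.lt_succ_iff.mp (Finset.mem_range.mp hn)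
      have h2 : |hpoly n y| ≤ hc n * (2^(M+1) * (1 + |y|^(M+1))) := by
        calc |hpoly n y| ≤ hc n * (1+|y|)^n :=
              hpoly_le n y _ hts (le_add_of_nonneg_left zero_le_one)
          _ ≤ hc n * (1+|y|)^(M+1) :=
              mul_le_mul_of_nonneg_left (pow_le_pow_right₀ hts (by omega)) (hc_nonneg n)
          _ ≤ hc n * (2^(M+1) * (1 + |y|^(M+1))) :=
              mul_le_mul_of_nonneg_left (onep_pow |y| (abs_nonneg y) (M+1)) (hc_nonneg n)
      exact mul_le_mul (key n hn').2 h2 (abs_nonneg _) hcnn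
    have hhcS : ∑ n ∈ Finset.range (M+1), hc n ≤ S :=
      Finset.sum_le_sum fun n _ => le_mul_of_one_le_right (hc_nonneg n) (h2Kp n)
    calc ‖r y‖
        ≤ ‖qminus M r y‖ +
          ∑ n ∈ Finset.range (M+1), ‖Qcoef r n‖ * |hpoly n y| := hdecomp y
      _ ≤ A^(M+1)/s^(((M:ℝ)+2)/4) * (1+|y|^(M+1)) +
          ∑ n ∈ Finset.range (M+1),
            ((2+|δ|) * A^(M+1) / s) * (hc n * (2^(M+1) * (1 + |y|^(M+1)))) :=
          add_le_add (hV2 y) (Finset.sum_le_sum hterm)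
      _ = A^(M+1)/s^(((M:ℝ)+2)/4) * (1+|y|^(M+1)) +
          ((2+|δ|) * A^(M+1) / s) *
            ((∑ n ∈ Finset.range (M+1), hc n) * (2^(M+1) * (1 + |y|^(M+1)))) := by
          rw [← Finset.mul_sum, ← Finset.sum_mul]
      _ ≤ (A^(M+1)/s) * (1+|y|^(M+1)) +
          ((2+|δ|) * A^(M+1) / s) * (S * (2^(M+1) * (1 + |y|^(M+1)))) := by
          refine add_le_add (mul_le_mul_of_nonneg_right
            (div_le_div_of_nonneg_left (by positivity) hs0 hsM) (by positivity)) ?_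
          exact mul_le_mul_of_nonneg_left (mul_le_mul_of_nonneg_right hhcS hXnn) hcnn
      _ = (1 + (2+|δ|) * 2^(M+1) * S) * (A ^ (M+1) / s) * (1 + |y| ^ (M+1)) := by ring
  -- Part (i): inner bound
  have hs14 : (1:ℝ) ≤ s ^ ((1:ℝ)/4) := Real.one_le_rpow hs (by norm_num)
  have hT1 : (1:ℝ) ≤ 2*K*s^((1:ℝ)/4) := by nlinarith
  have hTn : ∀ n : ℕ, (2*K*s^((1:ℝ)/4))^n = (2*K)^n * s^((n:ℝ)/4) := by
    intro n
    rw [mul_pow, ← Real.rpow_natCast (s ^ ((1:ℝ)/4)) n, ← Real.rpow_mul hs0.le,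
      show (1:ℝ)/4*(n:ℝ) = (n:ℝ)/4 by ring]
  have hsdiv : ∀ n : ℕ, s^((n:ℝ)/4) / s^(((n:ℝ)+1)/4) = 1 / s^((1:ℝ)/4) := by
    intro n
    rw [← Real.rpow_sub hs0, show (n:ℝ)/4 - ((n:ℝ)+1)/4 = -((1:ℝ)/4) by ring,
      Real.rpow_neg hs0.le]
    simp
  have P1 : ∀ y : ℝ, |y| < 2*K*s^((1:ℝ)/4) →
      ‖r y‖ ≤
        (1 + (2*K)^(M+1) + (2+|δ|) * 2^(M+1) * S) * A^(M+1) / s^((1:ℝ)/4) := by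
    intro y hy
    have hterm : ∀ n ∈ Finset.range (M+1),
        ‖Qcoef r n‖ * |hpoly n y| ≤
        (2+|δ|) * A^(M+1) * (hc n * (2*K)^n) / s^((1:ℝ)/4) := by
      intro n hn
      have hn' : n ≤ M := Nat.lt_succ_iff.mp (Finset.mem_range.mp hn)
      have h2 : |hpoly n y| ≤ hc n * ((2*K)^n * s^((n:ℝ)/4)) := by
        have h := hpoly_le n y (2*K*s^((1:ℝ)/4)) hT1 hy.le
        rwa [hTn n] at h
      calc ‖Qcoef r n‖ * |hpoly n y|
          ≤ ((2+|δ|) * A^(M+1) / s^(((n:ℝ)+1)/4)) * (hc n * ((2*K)^n * s^((n:ℝ)/4))) :=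
            mul_le_mul (key n hn').1 h2 (abs_nonneg _)
              (div_nonneg (by positivity) (Real.rpow_pos_of_pos hs0 _).le)
        _ = ((2+|δ|) * A^(M+1) * (hc n * (2*K)^n)) * (s^((n:ℝ)/4) / s^(((n:ℝ)+1)/4)) := by
            ring
        _ = ((2+|δ|) * A^(M+1) * (hc n * (2*K)^n)) * (1 / s^((1:ℝ)/4)) := by rw [hsdiv n]
        _ = (2+|δ|) * A^(M+1) * (hc n * (2*K)^n) / s^((1:ℝ)/4) := by ring
    have hsum : ∑ n ∈ Finset.range (M+1), ‖Qcoef r n‖ * |hpoly n y| ≤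
        (2+|δ|) * A^(M+1) * S / s^((1:ℝ)/4) := by
      calc ∑ n ∈ Finset.range (M+1), ‖Qcoef r n‖ * |hpoly n y|
          ≤ ∑ n ∈ Finset.range (M+1),
            (2+|δ|) * A^(M+1) * (hc n * (2*K)^n) / s^((1:ℝ)/4) := Finset.sum_le_sum hterm
        _ = (2+|δ|) * A^(M+1) * S / s^((1:ℝ)/4) := by
            rw [← Finset.sum_div, ← Finset.mul_sum]
    have hq : ‖qminus M r y‖ ≤ (1+(2*K)^(M+1)) * A^(M+1) / s^((1:ℝ)/4) := by
      have h1 : (1:ℝ) + |y|^(M+1) ≤ 1 + (2*K)^(M+1) * s^(((M:ℝ)+1)/4) := by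
        have h := pow_le_pow_left₀ (abs_nonneg y) hy.le (M+1)
        rw [hTn (M+1)] at h
        push_cast at h ⊢
        linarith
      calc ‖qminus M r y‖
          ≤ A^(M+1)/s^(((M:ℝ)+2)/4) * (1 + (2*K)^(M+1) * s^(((M:ℝ)+1)/4)) :=
            le_trans (hV2 y) (mul_le_mul_of_nonneg_left h1
              (div_nonneg (by positivity) hsMpos.le))
        _ = A^(M+1)/s^(((M:ℝ)+2)/4) +
            (2*K)^(M+1) * A^(M+1) * (s^(((M:ℝ)+1)/4) / s^(((M:ℝ)+2)/4)) := by ring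
        _ = A^(M+1)/s^(((M:ℝ)+2)/4) +
            (2*K)^(M+1) * A^(M+1) * (1 / s^((1:ℝ)/4)) := by
            rw [← Real.rpow_sub hs0,
              show ((M:ℝ)+1)/4 - ((M:ℝ)+2)/4 = -((1:ℝ)/4) by ring, Real.rpow_neg hs0.le]
            simp
        _ ≤ A^(M+1)/s^((1:ℝ)/4) + (2*K)^(M+1) * A^(M+1) * (1 / s^((1:ℝ)/4)) := by
            refine add_le_add (div_le_div_of_nonneg_left (by positivity) hspos14 ?_) le_rfl
            refine Real.rpow_le_rpow_of_exponent_le hs ?_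
            have : (0:ℝ) ≤ (M:ℝ) := Nat.cast_nonneg M
            linarith
        _ = (1+(2*K)^(M+1)) * A^(M+1) / s^((1:ℝ)/4) := by ring
    calc ‖r y‖
        ≤ ‖qminus M r y‖ +
          ∑ n ∈ Finset.range (M+1), ‖Qcoef r n‖ * |hpoly n y| := hdecomp y
      _ ≤ (1+(2*K)^(M+1)) * A^(M+1) / s^((1:ℝ)/4) +
          (2+|δ|) * A^(M+1) * S / s^((1:ℝ)/4) := add_le_add hq hsum
      _ = ((1+(2*K)^(M+1)) * A^(M+1) + (2+|δ|) * A^(M+1) * S) / s^((1:ℝ)/4) := by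
          rw [← add_div]
      _ ≤ (1 + (2*K)^(M+1) + (2+|δ|) * 2^(M+1) * S) * A^(M+1) / s^((1:ℝ)/4) := by
          apply (div_le_div_iff_of_pos_right hspos14).mpr
          have hp : (0:ℝ) ≤ (2+|δ|) * S := by positivity
          nlinarith [abs_nonneg δ, mul_le_mul_of_nonneg_left hpow2 hp]
  refine ⟨P1, ?_, ?_⟩
  · -- Part (i), global bound
    intro y
    have hC1 : (1:ℝ) ≤ 1 + (2*K)^(M+1) + (2+|δ|) * 2^(M+1) * S := by
      have h2 : (0:ℝ) ≤ (2+|δ|)*2^(M+1)*S := by positivity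
      linarith
    have hAM : A^(M+1) ≤ A^(M+2) := pow_le_pow_right₀ hA (by omega)
    rcases lt_or_ge |y| (2*K*s^((1:ℝ)/4)) with h | h
    · refine (P1 y h).trans ?_
      apply (div_le_div_iff_of_pos_right hspos14).mpr
      exact mul_le_mul_of_nonneg_left hAM (by linarith)
    · have hchi : chi χ₀ K y s = 0 := by
        rw [chi]
        refine hχ.2.2.2.2 _ ?_
        rw [le_div_iff₀ (by positivity)]
        calc 2 * (K * s^((1:ℝ)/4)) = 2*K*s^((1:ℝ)/4) := by ring
          _ ≤ |y| := h
      have h2 := hV1 y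
      rw [hchi] at h2
      norm_num at h2
      calc ‖r y‖ ≤ A^(M+2)/s^((1:ℝ)/4) := h2
        _ ≤ (1 + (2*K)^(M+1) + (2+|δ|) * 2^(M+1) * S) * A^(M+2) / s^((1:ℝ)/4) := by
            apply (div_le_div_iff_of_pos_right hspos14).mpr
            nlinarith [pow_pos hA0 (M+2)]
  · -- Part (ii): weighted bound
    intro y
    refine (P3 y).trans ?_
    have hw : (0:ℝ) ≤ 1 + |y|^(M+1) := by positivity
    have hv : (0:ℝ) ≤ A^(M+1)/s := div_nonneg (by positivity) hs0.le
    refine mul_le_mul_of_nonneg_right (mul_le_mul_of_nonneg_right ?_ hv) hw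
    linarith
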